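/- arXiv:0807.2847 — 3 statements merged into one kernel-verified Lean document; each statement's English description precedes it below -/
import Mathlib

section
/- Let L be a finite extension of Q_p with absolute value |·|, and let g be a finite-dimensional Lie algebra over L with ordered basis x_1,...,x_d whose structure constants lie in the ring of integers of L. For real r > 1, define a norm on the universal enveloping algebra U(g) by ||Σ_α d_α X^α||_r = sup_α |d_α| r^{|α|}, where X^α = x_1^{α_1}···x_d^{α_d} ranges over the PBW basis. Then ||·||_r is submultiplicative: ||uv||_r ≤ ||u||_r ||v||_r for all u, v ∈ U(g). -/
open scoped NNReal

/-- The PBW-norm `‖Σ_α d_α X^α‖_r = sup_α ‖d_α‖ r^{|α|}` on the universal enveloping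
algebra, expressed via a PBW basis `b` indexed by multi-indices `α : Fin d →₀ ℕ`. -/
noncomputable def pbwNorm {L : Type*} [NontriviallyNormedField L] {𝔤 : Type*}
    [LieRing 𝔤] [LieAlgebra L 𝔤] {d : ℕ}
    (b : Module.Basis (Fin d →₀ ℕ) L (UniversalEnvelopingAlgebra L 𝔤)) (r : ℝ≥0)
    (u : UniversalEnvelopingAlgebra L 𝔤) : ℝ≥0 :=
  (b.repr u).support.sup fun α => ‖b.repr u α‖₊ * r ^ (α.sum fun _ n => n)

/-!
Let `Λₙ` be the `𝒪_L`-span of the PBW monomials `X^α` with `|α| ≤ n`. Moving `x_i` into PBW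
position in `x_i X^γ` with `x_i x_j = x_j x_i + Σ_k c_{ijk} x_k` shows, by induction on `(|γ|, i)`
ordered lexicographically, that `x_i Λₙ ⊆ Λₙ₊₁`: integral structure constants only ever multiply
by elements of `𝒪_L`. Hence `X^α X^β ∈ Λ_{|α|+|β|}`, so `‖X^α X^β‖_r ≤ r^{|α|+|β|}` for `r ≥ 1`,
and the ultrametric inequality extends this bound to `‖uv‖_r ≤ ‖u‖_r ‖v‖_r`.
-/

open UniversalEnvelopingAlgebra
open Finsupp (single degree)

theorem List.mul_prod_map_pow_eq_prod_map_pow_add_single {M ι : Type*} [Monoid M] [LinearOrder ι]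
    (x : ι → M) (e : ι →₀ ℕ) {l : List ι} (hl : l.Pairwise (· < ·)) {i : ι} (hi : i ∈ l)
    (he : ∀ k < i, e k = 0) :
    x i * (l.map fun k => x k ^ e k).prod =
      (l.map fun k => x k ^ (e + single i 1 : ι →₀ ℕ) k).prod := by
  induction l with
  | nil => simp at hi
  | cons a l ih =>
    rw [List.pairwise_cons] at hl
    simp only [List.map_cons, List.prod_cons]
    rcases lt_trichotomy a i with hai | rfl | hia
    · have hea : (e + single i 1 : ι →₀ ℕ) a = 0 := by
        simp [he a hai, Finsupp.single_eq_of_ne hai.ne]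
      rw [hea, he a hai, pow_zero, one_mul, one_mul, ih hl.2 (by simpa [hai.ne'] using hi)]
    · have hl' : ∀ k ∈ l, x k ^ (e + single a 1 : ι →₀ ℕ) k = x k ^ e k := fun k hk => by
        simp [Finsupp.single_eq_of_ne (hl.1 k hk).ne']
      rw [List.map_congr_left hl', ← mul_assoc, ← pow_succ']
      simp
    · exact absurd hia (hl.1 i (by simpa [hia.ne] using hi)).not_gt

theorem Finsupp.exists_eq_add_single_of_exists_lt_ne_zero {ι : Type*} [LinearOrder ι]
    [WellFoundedLT ι] (γ : ι →₀ ℕ) {i : ι} (h : ∃ k < i, γ k ≠ 0) :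
    ∃ j < i, ∃ γ' : ι →₀ ℕ, (∀ k < j, γ' k = 0) ∧ γ = γ' + single j 1 := by
  obtain ⟨j, ⟨hji, hj⟩, hmin⟩ := exists_minimal_of_wellFoundedLT (fun k => k < i ∧ γ k ≠ 0) h
  refine ⟨j, hji, γ - single j 1, fun k hk => ?_, ?_⟩
  · have : γ k = 0 := by
      by_contra hk'
      exact hk.not_ge (hmin ⟨hk.trans hji, hk'⟩ hk.le)
    simp [this]
  · rw [tsub_add_cancel_of_le (Finsupp.single_le_iff.mpr (Nat.one_le_iff_ne_zero.mpr hj))]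

section

attribute [local instance] LieRing.ofAssociativeRing

theorem UniversalEnvelopingAlgebra.ι_mul_ι {R L : Type*} [CommRing R] [LieRing L]
    [LieAlgebra R L] (x y : L) : ι R x * ι R y = ι R y * ι R x + ι R ⁅x, y⁆ := by
  rw [LieHom.map_lie, Ring.lie_def]
  abel

end

section Norm

variable {L : Type*} [NontriviallyNormedField L] {𝔤 : Type*} [LieRing 𝔤] [LieAlgebra L 𝔤]
  {d : ℕ} (b : Module.Basis (Fin d →₀ ℕ) L (UniversalEnvelopingAlgebra L 𝔤)) (r : ℝ≥0)

theorem pbwNorm_le_iff {u : UniversalEnvelopingAlgebra L 𝔤} {C : ℝ≥0} :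
    pbwNorm b r u ≤ C ↔ ∀ α, ‖b.repr u α‖₊ * r ^ degree α ≤ C := by
  refine ⟨fun h α => ?_, fun h => Finset.sup_le fun α _ => h α⟩
  by_cases hα : α ∈ (b.repr u).support
  · exact (Finset.le_sup (f := fun α => ‖b.repr u α‖₊ * r ^ degree α) hα).trans h
  · simp [Finsupp.notMem_support_iff.mp hα]

theorem nnnorm_repr_mul_le_pbwNorm (u : UniversalEnvelopingAlgebra L 𝔤) (α : Fin d →₀ ℕ) :
    ‖b.repr u α‖₊ * r ^ degree α ≤ pbwNorm b r u :=
  (pbwNorm_le_iff b r).mp le_rfl α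

theorem pbwNorm_smul_le (c : L) (u : UniversalEnvelopingAlgebra L 𝔤) :
    pbwNorm b r (c • u) ≤ ‖c‖₊ * pbwNorm b r u := by
  refine (pbwNorm_le_iff b r).mpr fun α => ?_
  rw [map_smul, Finsupp.smul_apply, smul_eq_mul, nnnorm_mul, mul_assoc]
  exact mul_le_mul_right (nnnorm_repr_mul_le_pbwNorm b r u α) _

variable [IsUltrametricDist L]

theorem pbwNorm_add_le_max (u v : UniversalEnvelopingAlgebra L 𝔤) :
    pbwNorm b r (u + v) ≤ max (pbwNorm b r u) (pbwNorm b r v) := by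
  refine (pbwNorm_le_iff b r).mpr fun α => ?_
  rw [map_add, Finsupp.add_apply]
  calc ‖b.repr u α + b.repr v α‖₊ * r ^ degree α
      ≤ max ‖b.repr u α‖₊ ‖b.repr v α‖₊ * r ^ degree α :=
        mul_le_mul_left (IsUltrametricDist.nnnorm_add_le_max _ _) _
    _ = max (‖b.repr u α‖₊ * r ^ degree α) (‖b.repr v α‖₊ * r ^ degree α) :=
        max_mul_of_nonneg _ _ bot_le
    _ ≤ max (pbwNorm b r u) (pbwNorm b r v) :=
        max_le_max (nnnorm_repr_mul_le_pbwNorm b r u α) (nnnorm_repr_mul_le_pbwNorm b r v α)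

theorem pbwNorm_sum_le {ι : Type*} (s : Finset ι) (f : ι → UniversalEnvelopingAlgebra L 𝔤)
    {C : ℝ≥0} (h : ∀ a ∈ s, pbwNorm b r (f a) ≤ C) : pbwNorm b r (∑ a ∈ s, f a) ≤ C := by
  classical
  induction s using Finset.induction_on with
  | empty => simp [pbwNorm]
  | insert a s ha ih =>
    rw [Finset.sum_insert ha]
    exact (pbwNorm_add_le_max b r _ _).trans
      (max_le (h a (s.mem_insert_self a)) (ih fun x hx => h x (Finset.mem_insert_of_mem hx)))

theorem pbwNorm_mul_le_of_basis
    (h : ∀ α β, pbwNorm b r (b α * b β) ≤ r ^ degree α * r ^ degree β)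
    (u v : UniversalEnvelopingAlgebra L 𝔤) :
    pbwNorm b r (u * v) ≤ pbwNorm b r u * pbwNorm b r v := by
  have expand : u * v = ∑ α ∈ (b.repr u).support, ∑ β ∈ (b.repr v).support,
      (b.repr u α * b.repr v β) • (b α * b β) := by
    conv_lhs => rw [← b.linearCombination_repr u, ← b.linearCombination_repr v]
    simp only [Finsupp.linearCombination_apply, Finsupp.sum, Finset.sum_mul, Finset.mul_sum,
      smul_mul_smul_comm]
    exact Finset.sum_comm
  rw [expand]
  refine pbwNorm_sum_le b r _ _ fun α _ => pbwNorm_sum_le b r _ _ fun β _ => ?_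
  calc pbwNorm b r ((b.repr u α * b.repr v β) • (b α * b β))
      ≤ ‖b.repr u α * b.repr v β‖₊ * (r ^ degree α * r ^ degree β) :=
        (pbwNorm_smul_le b r _ _).trans (mul_le_mul_right (h α β) _)
    _ = (‖b.repr u α‖₊ * r ^ degree α) * (‖b.repr v β‖₊ * r ^ degree β) := by
        rw [nnnorm_mul]; ring
    _ ≤ pbwNorm b r u * pbwNorm b r v :=
        mul_le_mul' (nnnorm_repr_mul_le_pbwNorm b r u α) (nnnorm_repr_mul_le_pbwNorm b r v β)

end Norm

section Lattice

variable {L : Type*} [NontriviallyNormedField L] [IsUltrametricDist L] {𝔤 : Type*} [LieRing 𝔤]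
  [LieAlgebra L 𝔤] {d : ℕ} (b : Module.Basis (Fin d →₀ ℕ) L (UniversalEnvelopingAlgebra L 𝔤))

def pbwLattice (n : ℕ) : AddSubgroup (UniversalEnvelopingAlgebra L 𝔤) where
  carrier := {u | ∀ α, ‖b.repr u α‖ ≤ 1 ∧ (n < degree α → b.repr u α = 0)}
  zero_mem' := by simp
  add_mem' {u v} hu hv α := by
    refine ⟨?_, fun hα => by simp [(hu α).2 hα, (hv α).2 hα]⟩
    rw [map_add, Finsupp.add_apply]
    exact (IsUltrametricDist.norm_add_le_max _ _).trans (max_le (hu α).1 (hv α).1)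
  neg_mem' {u} hu α := by simpa using hu α

theorem basis_mem_pbwLattice (α : Fin d →₀ ℕ) : b α ∈ pbwLattice b (degree α) := fun β => by
  rw [b.repr_self]
  by_cases h : α = β
  · subst h; simp
  · simp [Finsupp.single_eq_of_ne' h]

variable {b}

theorem pbwLattice_mono : Monotone (pbwLattice b) := fun _ _ hnm _ hu α =>
  ⟨(hu α).1, fun hα => (hu α).2 (hnm.trans_lt hα)⟩

theorem smul_mem_pbwLattice {n : ℕ} {c : L} (hc : ‖c‖ ≤ 1) {u : UniversalEnvelopingAlgebra L 𝔤}
    (hu : u ∈ pbwLattice b n) : c • u ∈ pbwLattice b n := fun α => by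
  simp only [map_smul, Finsupp.smul_apply, smul_eq_mul, norm_mul]
  exact ⟨mul_le_one₀ hc (norm_nonneg _) (hu α).1, fun hα => by rw [(hu α).2 hα, mul_zero]⟩

theorem map_mem_pbwLattice {n m : ℕ}
    (f : UniversalEnvelopingAlgebra L 𝔤 →ₗ[L] UniversalEnvelopingAlgebra L 𝔤)
    (hf : ∀ α, degree α ≤ n → f (b α) ∈ pbwLattice b m) {u : UniversalEnvelopingAlgebra L 𝔤}
    (hu : u ∈ pbwLattice b n) : f u ∈ pbwLattice b m := by
  rw [← b.linearCombination_repr u, Finsupp.linearCombination_apply, Finsupp.sum, map_sum]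
  refine AddSubgroup.sum_mem _ fun α hα => ?_
  rw [map_smul]
  refine smul_mem_pbwLattice (hu α).1 (hf α ?_)
  exact not_lt.mp fun h => Finsupp.mem_support_iff.mp hα ((hu α).2 h)

theorem pbwNorm_le_of_mem_pbwLattice {r : ℝ≥0} (hr : 1 ≤ r) {n : ℕ}
    {u : UniversalEnvelopingAlgebra L 𝔤} (hu : u ∈ pbwLattice b n) : pbwNorm b r u ≤ r ^ n := by
  refine (pbwNorm_le_iff b r).mpr fun α => ?_
  rcases le_or_gt (degree α) n with hα | hα
  · exact mul_le_of_le_one_of_le (by exact_mod_cast (hu α).1) (pow_le_pow_right₀ hr hα)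
  · simp [(hu α).2 hα]

end Lattice

section PBW

variable {L : Type*} [NontriviallyNormedField L] {𝔤 : Type*} [LieRing 𝔤] [LieAlgebra L 𝔤] {d : ℕ}
  {bg : Module.Basis (Fin d) L 𝔤} {b : Module.Basis (Fin d →₀ ℕ) L (UniversalEnvelopingAlgebra L 𝔤)}
  (hb : ∀ α : Fin d →₀ ℕ,
    b α = ((List.finRange d).map fun i =>
      (UniversalEnvelopingAlgebra.ι L (bg i) : UniversalEnvelopingAlgebra L 𝔤) ^ α i).prod)

include hb in
theorem ι_mul_basis_of_forall_lt_eq_zero {i : Fin d} {γ : Fin d →₀ ℕ} (hγ : ∀ k < i, γ k = 0) :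
    ι L (bg i) * b γ = b (γ + single i 1) := by
  rw [hb, hb]
  exact List.mul_prod_map_pow_eq_prod_map_pow_add_single (fun k => ι L (bg k)) γ
    (List.sortedLT_iff_pairwise.mp (List.sortedLT_finRange d)) (List.mem_finRange i) hγ

variable [IsUltrametricDist L] (hint : ∀ i j k, ‖bg.repr ⁅bg i, bg j⁆ k‖ ≤ 1)
include hint hb

/- With `j < i` the least index occurring in `γ = γ' + e_j`, rewrite
`x_i X^γ = x_j (x_i X^γ') + Σ_k c_{ijk} x_k X^γ'`; every recursive call lowers `(|γ|, i)`. -/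
theorem ι_mul_basis_mem_pbwLattice (i : Fin d) (γ : Fin d →₀ ℕ) :
    ι L (bg i) * b γ ∈ pbwLattice b (degree γ + 1) := by
  by_cases hγ : ∀ k < i, γ k = 0
  · rw [ι_mul_basis_of_forall_lt_eq_zero hb hγ]
    convert basis_mem_pbwLattice b (γ + single i 1) using 2
    simp [map_add, Finsupp.degree_single]
  push Not at hγ
  obtain ⟨j, hji, γ', hγ', rfl⟩ := γ.exists_eq_add_single_of_exists_lt_ne_zero hγ
  have hdeg : degree (γ' + single j 1) = degree γ' + 1 := by
    simp [map_add, Finsupp.degree_single]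
  have ih_γ' (k : Fin d) : ι L (bg k) * b γ' ∈ pbwLattice b (degree (γ' + single j 1)) :=
    hdeg ▸ ι_mul_basis_mem_pbwLattice k γ'
  have ih_j (δ : Fin d →₀ ℕ) (hδ : degree δ ≤ degree (γ' + single j 1)) :
      ι L (bg j) * b δ ∈ pbwLattice b (degree (γ' + single j 1) + 1) :=
    pbwLattice_mono (by omega) (ι_mul_basis_mem_pbwLattice j δ)
  rw [← ι_mul_basis_of_forall_lt_eq_zero hb hγ', ← mul_assoc, ι_mul_ι, add_mul, mul_assoc]
  refine add_mem (map_mem_pbwLattice (LinearMap.mulLeft L (ι L (bg j))) ih_j (ih_γ' i)) ?_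
  rw [← bg.sum_repr ⁅bg i, bg j⁆, map_sum, Finset.sum_mul]
  refine AddSubgroup.sum_mem _ fun k _ => ?_
  rw [map_smul, smul_mul_assoc]
  exact smul_mem_pbwLattice (hint i j k) (pbwLattice_mono (by omega) (ih_γ' k))
termination_by (degree γ, i.val)
decreasing_by
  all_goals
    subst_vars
    rw [Prod.lex_def]
    omega

theorem ι_pow_mul_mem_pbwLattice (i : Fin d) (m : ℕ) {n : ℕ} {u : UniversalEnvelopingAlgebra L 𝔤}
    (hu : u ∈ pbwLattice b n) : ι L (bg i) ^ m * u ∈ pbwLattice b (m + n) := by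
  induction m with
  | zero => simpa using hu
  | succ m ih =>
    rw [pow_succ', mul_assoc, add_right_comm]
    refine map_mem_pbwLattice (LinearMap.mulLeft L (ι L (bg i))) (fun α hα => ?_) ih
    exact pbwLattice_mono (by omega) (ι_mul_basis_mem_pbwLattice hb hint i α)

theorem basis_mul_mem_pbwLattice (α : Fin d →₀ ℕ) {n : ℕ} {u : UniversalEnvelopingAlgebra L 𝔤}
    (hu : u ∈ pbwLattice b n) : b α * u ∈ pbwLattice b (degree α + n) := by
  rw [hb, Finsupp.degree_eq_sum, Fin.sum_univ_def]
  induction List.finRange d with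
  | nil => simpa using hu
  | cons k l ih =>
    rw [List.map_cons, List.map_cons, List.prod_cons, List.sum_cons, mul_assoc, add_assoc]
    exact ι_pow_mul_mem_pbwLattice hb hint k (α k) ih

end PBW

theorem pbwNorm_mul_le_general
    (L : Type*) [NontriviallyNormedField L] [IsUltrametricDist L]
    (𝔤 : Type*) [LieRing 𝔤] [LieAlgebra L 𝔤] {d : ℕ}
    (bg : Module.Basis (Fin d) L 𝔤)
    (hint : ∀ i j k, ‖bg.repr ⁅bg i, bg j⁆ k‖ ≤ 1)
    (b : Module.Basis (Fin d →₀ ℕ) L (UniversalEnvelopingAlgebra L 𝔤))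
    (hb : ∀ α : Fin d →₀ ℕ,
      b α = ((List.finRange d).map fun i =>
        (UniversalEnvelopingAlgebra.ι L (bg i) : UniversalEnvelopingAlgebra L 𝔤) ^ α i).prod)
    (r : ℝ≥0) (hr : 1 < r) (u v : UniversalEnvelopingAlgebra L 𝔤) :
    pbwNorm b r (u * v) ≤ pbwNorm b r u * pbwNorm b r v := by
  refine pbwNorm_mul_le_of_basis b r (fun α β => ?_) u v
  rw [← pow_add]
  exact pbwNorm_le_of_mem_pbwLattice hr.le
    (basis_mul_mem_pbwLattice hb hint α (basis_mem_pbwLattice b β))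

/-- for a finite extension `L` of `ℚ_p`, a finite-dimensional Lie algebra `𝔤`
over `L` with basis `bg` whose structure constants are integral, the PBW norm `‖·‖_r`
(`r > 1`) on `U(𝔤)` is submultiplicative. -/
theorem pbwNorm_mul_le {p : ℕ} [Fact (Nat.Prime p)]
    (L : Type*) [NontriviallyNormedField L] [NormedAlgebra ℚ_[p] L]
    [FiniteDimensional ℚ_[p] L] [IsUltrametricDist L]
    (𝔤 : Type*) [LieRing 𝔤] [LieAlgebra L 𝔤] {d : ℕ}
    (bg : Module.Basis (Fin d) L 𝔤)
    (hint : ∀ i j k, ‖bg.repr ⁅bg i, bg j⁆ k‖ ≤ 1)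
    (b : Module.Basis (Fin d →₀ ℕ) L (UniversalEnvelopingAlgebra L 𝔤))
    (hb : ∀ α : Fin d →₀ ℕ,
      b α = ((List.finRange d).map fun i =>
        (UniversalEnvelopingAlgebra.ι L (bg i) : UniversalEnvelopingAlgebra L 𝔤) ^ α i).prod)
    (r : ℝ≥0) (hr : 1 < r) (u v : UniversalEnvelopingAlgebra L 𝔤) :
    pbwNorm b r (u * v) ≤ pbwNorm b r u * pbwNorm b r v :=
  pbwNorm_mul_le_general L 𝔤 bg hint b hb r hr u v
end

section
/- Let L be a p-adic local field and g a finite-dimensional L-Lie algebra with basis x_1,...,x_d having integral structure constants. Fix r > 1 and the norm ||·||_r on U(g). If c_{αβ,γ} ∈ L are defined by X^α X^β = Σ_γ c_{αβ,γ} X^γ (expansion of a product of PBW monomials in the PBW basis), then |c_{αβ,γ}| ≤ r^{|α|+|β|-|γ|} for all multi-indices α, β, γ. -/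
open scoped NNReal

/-!
Over the valuation ring of `L`, the span of the PBW monomials of degree `≤ n` is mapped by left
multiplication with a generator `x_i` into the span of the monomials of degree `≤ n + 1`. If the
smallest variable `x_j` of `X^γ` satisfies `j < i`, write `X^γ = x_j X^γ'` and
`x_i x_j = x_j x_i + [x_i, x_j]`; the terms `x_j (x_i X^γ')` and `[x_i, x_j] X^γ'` are handled by
induction on `(|γ|, i)` ordered lexicographically, using that `[x_i, x_j]` has integral
coordinates and that, by the ultrametric inequality, sums of integral vectors are integral.
Hence `X^α X^β` is an integral combination of monomials of degree `≤ |α| + |β|`: every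
`c_{αβ,γ}` has norm `≤ 1` and vanishes when `|γ| > |α| + |β|`, and for `r ≥ 1` either fact gives
`|c_{αβ,γ}| r^{|γ|} ≤ r^{|α| + |β|}`.
-/

namespace Module.Basis

variable {L M σ : Type*} [NormedField L] [IsUltrametricDist L] [AddCommGroup M] [Module L M]
  (b : Module.Basis (σ →₀ ℕ) L M)

/-- The span, over the valuation ring `‖c‖ ≤ 1` of `L`, of the basis vectors of degree `≤ n`. -/
def integralSpanDegLE (n : ℕ) : AddSubmonoid M where
  carrier := {u | ∀ δ, ‖b.repr u δ‖ ≤ 1 ∧ (n < δ.degree → b.repr u δ = 0)}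
  zero_mem' := by simp
  add_mem' {u v} hu hv δ := by
    simp only [map_add, Finsupp.add_apply]
    refine ⟨(IsUltrametricDist.norm_add_le_max _ _).trans (max_le (hu δ).1 (hv δ).1), fun h => ?_⟩
    rw [(hu δ).2 h, (hv δ).2 h, add_zero]

variable {b}

theorem self_mem_integralSpanDegLE {n : ℕ} {γ : σ →₀ ℕ} (hγ : γ.degree ≤ n) :
    b γ ∈ b.integralSpanDegLE n := by
  intro δ
  rw [repr_self]
  by_cases hδ : γ = δ
  · subst hδ
    simp only [Finsupp.single_eq_same, norm_one, le_refl, true_and]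
    omega
  · simp [Finsupp.single_eq_of_ne' hδ]

theorem integralSpanDegLE_mono : Monotone b.integralSpanDegLE :=
  fun _ _ hnm _ hu δ => ⟨(hu δ).1, fun h => (hu δ).2 (hnm.trans_lt h)⟩

theorem smul_mem_integralSpanDegLE {n : ℕ} {c : L} (hc : ‖c‖ ≤ 1) {u : M}
    (hu : u ∈ b.integralSpanDegLE n) : c • u ∈ b.integralSpanDegLE n := by
  intro δ
  simp only [map_smul, Finsupp.smul_apply, smul_eq_mul, norm_mul]
  exact ⟨mul_le_one₀ hc (norm_nonneg _) (hu δ).1, fun h => by rw [(hu δ).2 h, mul_zero]⟩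

theorem degree_le_of_mem_integralSpanDegLE {n : ℕ} {u : M} (hu : u ∈ b.integralSpanDegLE n)
    {δ : σ →₀ ℕ} (hδ : b.repr u δ ≠ 0) : δ.degree ≤ n :=
  not_lt.mp fun h => hδ ((hu δ).2 h)

theorem map_mem_integralSpanDegLE (f : M →ₗ[L] M) {n k : ℕ}
    (hf : ∀ δ : σ →₀ ℕ, δ.degree ≤ n → f (b δ) ∈ b.integralSpanDegLE (δ.degree + k))
    {u : M} (hu : u ∈ b.integralSpanDegLE n) : f u ∈ b.integralSpanDegLE (n + k) := by
  rw [← b.linearCombination_repr u, Finsupp.linearCombination_apply, map_finsuppSum]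
  refine sum_mem fun δ hδ => ?_
  have hdeg := degree_le_of_mem_integralSpanDegLE hu (Finsupp.mem_support_iff.mp hδ)
  simp only [map_smul]
  exact smul_mem_integralSpanDegLE (hu δ).1
    (integralSpanDegLE_mono (by omega) (hf δ hdeg))

theorem nnnorm_repr_mul_pow_le {n : ℕ} {u : M} (hu : u ∈ b.integralSpanDegLE n) {r : ℝ≥0}
    (hr : 1 ≤ r) (γ : σ →₀ ℕ) : ‖b.repr u γ‖₊ * r ^ γ.degree ≤ r ^ n := by
  by_cases hγ : b.repr u γ = 0
  · simp [hγ]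
  have hnorm : ‖b.repr u γ‖₊ ≤ 1 := (hu γ).1
  calc ‖b.repr u γ‖₊ * r ^ γ.degree ≤ 1 * r ^ n :=
        mul_le_mul' hnorm (pow_le_pow_right₀ hr (degree_le_of_mem_integralSpanDegLE hu hγ))
    _ = r ^ n := one_mul _

end Module.Basis

theorem List.mul_prod_map_pow_of_pairwise_lt {σ M : Type*} [LinearOrder σ] [Monoid M]
    (x : σ → M) {i : σ} {l : List σ} (hl : l.Pairwise (· < ·)) (hi : i ∈ l) {γ : σ →₀ ℕ}
    (hγ : ∀ j < i, γ j = 0) :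
    x i * (l.map fun j => x j ^ γ j).prod
      = (l.map fun j => x j ^ (γ + Finsupp.single i 1 : σ →₀ ℕ) j).prod := by
  induction l with
  | nil => simp at hi
  | cons j t ih =>
    obtain ⟨hjt, ht⟩ := List.pairwise_cons.mp hl
    simp only [List.map_cons, List.prod_cons]
    rcases List.mem_cons.mp hi with rfl | hit
    · have htail : ∀ k ∈ t, (γ + Finsupp.single i 1 : σ →₀ ℕ) k = γ k := fun k hk => by
        rw [Finsupp.add_apply, Finsupp.single_eq_of_ne (hjt k hk).ne', add_zero]
      rw [Finsupp.add_apply, Finsupp.single_eq_same,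
        List.map_congr_left fun k hk => congrArg (x k ^ ·) (htail k hk), ← mul_assoc, ← pow_succ']
    · have hji := hjt i hit
      rw [Finsupp.add_apply, hγ j hji, Finsupp.single_eq_of_ne hji.ne, add_zero, pow_zero,
        one_mul, one_mul, ih ht hit]

namespace UniversalEnvelopingAlgebra

attribute [local instance] LieRing.ofAssociativeRing

section CommRing

variable {R 𝔤 : Type*} [CommRing R] [LieRing 𝔤] [LieAlgebra R 𝔤]

theorem ι_mul_ι_s2 (x y : 𝔤) : ι R x * ι R y = ι R y * ι R x + ι R ⁅x, y⁆ := by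
  rw [LieHom.map_lie, Ring.lie_def, add_sub_cancel]

theorem ι_eq_sum_repr {κ : Type*} [Fintype κ] (bg : Module.Basis κ R 𝔤) (x : 𝔤) :
    ι R x = ∑ k, bg.repr x k • ι R (bg k) := by
  conv_lhs => rw [← bg.sum_repr x]
  simp only [map_sum, map_smul]

variable {d : ℕ}

def IsPBWBasis (bg : Module.Basis (Fin d) R 𝔤)
    (b : Module.Basis (Fin d →₀ ℕ) R (UniversalEnvelopingAlgebra R 𝔤)) : Prop :=
  ∀ α, b α = ((List.finRange d).map fun i =>
    (ι R (bg i) : UniversalEnvelopingAlgebra R 𝔤) ^ α i).prod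

theorem IsPBWBasis.ι_mul_eq {bg : Module.Basis (Fin d) R 𝔤}
    {b : Module.Basis (Fin d →₀ ℕ) R (UniversalEnvelopingAlgebra R 𝔤)} (hb : IsPBWBasis bg b)
    {i : Fin d} {γ : Fin d →₀ ℕ} (hγ : ∀ j < i, γ j = 0) :
    ι R (bg i) * b γ = b (γ + Finsupp.single i 1) := by
  rw [hb γ, hb]
  exact List.mul_prod_map_pow_of_pairwise_lt
    (fun j => (ι R (bg j) : UniversalEnvelopingAlgebra R 𝔤))
    (List.pairwise_lt_finRange d) (List.mem_finRange i) hγ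

end CommRing

variable {L 𝔤 : Type*} [NormedField L] [IsUltrametricDist L] [LieRing 𝔤] [LieAlgebra L 𝔤] {d : ℕ}
  {bg : Module.Basis (Fin d) L 𝔤} {b : Module.Basis (Fin d →₀ ℕ) L (UniversalEnvelopingAlgebra L 𝔤)}


theorem IsPBWBasis.ι_mul_mem (hint : ∀ i j k, ‖bg.repr ⁅bg i, bg j⁆ k‖ ≤ 1)
    (hb : IsPBWBasis bg b) (i : Fin d) (γ : Fin d →₀ ℕ) :
    ι L (bg i) * b γ ∈ b.integralSpanDegLE (γ.degree + 1) := by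
  by_cases hsorted : ∀ j < i, γ j = 0
  · rw [hb.ι_mul_eq hsorted]
    exact Module.Basis.self_mem_integralSpanDegLE (by simp)
  push Not at hsorted
  obtain ⟨l, hli, hl⟩ := hsorted
  obtain ⟨j, hj, hjmin⟩ := wellFounded_lt.has_min {j | γ j ≠ 0} ⟨l, hl⟩
  have hji : j < i := (not_lt.mp (hjmin l hl)).trans_lt hli
  obtain ⟨γ', hγ⟩ : ∃ γ', γ = γ' + Finsupp.single j 1 := ⟨γ - Finsupp.single j 1,
    (tsub_add_cancel_of_le (Finsupp.single_le_iff.mpr (Nat.one_le_iff_ne_zero.mpr hj))).symm⟩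
  have hγ' : ∀ l < j, γ' l = 0 := fun l hl => by
    have : γ l = 0 := not_not.mp fun h => hjmin l h hl
    rw [hγ, Finsupp.add_apply, Finsupp.single_eq_of_ne hl.ne] at this
    omega
  have hdeg : γ.degree = γ'.degree + 1 := by rw [hγ, map_add, Finsupp.degree_single]
  have hsplit : ι L (bg i) * b γ
      = ι L (bg j) * (ι L (bg i) * b γ') + ι L ⁅bg i, bg j⁆ * b γ' := by
    rw [hγ, ← hb.ι_mul_eq hγ', ← mul_assoc, ι_mul_ι_s2, add_mul, mul_assoc]
  rw [hsplit, hdeg]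
  refine add_mem ?_ ?_
  · exact Module.Basis.map_mem_integralSpanDegLE (LinearMap.mulLeft L (ι L (bg j)))
      (fun δ _ => hb.ι_mul_mem hint j δ) (hb.ι_mul_mem hint i γ')
  · rw [ι_eq_sum_repr bg, Finset.sum_mul]
    refine sum_mem fun k _ => ?_
    rw [smul_mul_assoc]
    exact Module.Basis.integralSpanDegLE_mono (Nat.le_succ _)
      (Module.Basis.smul_mem_integralSpanDegLE (hint i j k) (hb.ι_mul_mem hint k γ'))
termination_by (γ.degree, i)
decreasing_by
  all_goals simp only [Prod.lex_def]; omega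

theorem IsPBWBasis.ι_mul_mem_of_mem (hint : ∀ i j k, ‖bg.repr ⁅bg i, bg j⁆ k‖ ≤ 1)
    (hb : IsPBWBasis bg b) (i : Fin d) {n : ℕ} {v : UniversalEnvelopingAlgebra L 𝔤}
    (hv : v ∈ b.integralSpanDegLE n) : ι L (bg i) * v ∈ b.integralSpanDegLE (n + 1) :=
  Module.Basis.map_mem_integralSpanDegLE (LinearMap.mulLeft L _)
    (fun δ _ => hb.ι_mul_mem hint i δ) hv

theorem IsPBWBasis.ι_pow_mul_mem (hint : ∀ i j k, ‖bg.repr ⁅bg i, bg j⁆ k‖ ≤ 1)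
    (hb : IsPBWBasis bg b) (i : Fin d) (m : ℕ) {n : ℕ} {v : UniversalEnvelopingAlgebra L 𝔤}
    (hv : v ∈ b.integralSpanDegLE n) : ι L (bg i) ^ m * v ∈ b.integralSpanDegLE (n + m) := by
  induction m with
  | zero => simpa using hv
  | succ m ih =>
    rw [pow_succ', mul_assoc, ← add_assoc]
    exact hb.ι_mul_mem_of_mem hint i ih

theorem IsPBWBasis.mul_mem (hint : ∀ i j k, ‖bg.repr ⁅bg i, bg j⁆ k‖ ≤ 1)
    (hb : IsPBWBasis bg b) (α : Fin d →₀ ℕ) {n : ℕ} {v : UniversalEnvelopingAlgebra L 𝔤}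
    (hv : v ∈ b.integralSpanDegLE n) : b α * v ∈ b.integralSpanDegLE (n + α.degree) := by
  suffices ∀ l : List (Fin d),
      (l.map fun i => (ι L (bg i) : UniversalEnvelopingAlgebra L 𝔤) ^ α i).prod * v
        ∈ b.integralSpanDegLE (n + (l.map α).sum) by
    rw [hb α, Finsupp.degree_eq_sum, Fin.sum_univ_def]
    exact this _
  intro l
  induction l with
  | nil => simpa using hv
  | cons i l ih =>
    simp only [List.map_cons, List.prod_cons, List.sum_cons, mul_assoc]
    rw [← add_assoc, add_right_comm]
    exact hb.ι_pow_mul_mem hint i (α i) ih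

end UniversalEnvelopingAlgebra

theorem pbw_structure_coeff_bound_general
    (L : Type*) [NontriviallyNormedField L] [IsUltrametricDist L]
    (𝔤 : Type*) [LieRing 𝔤] [LieAlgebra L 𝔤] {d : ℕ}
    (bg : Module.Basis (Fin d) L 𝔤)
    (hint : ∀ i j k, ‖bg.repr ⁅bg i, bg j⁆ k‖ ≤ 1)
    (b : Module.Basis (Fin d →₀ ℕ) L (UniversalEnvelopingAlgebra L 𝔤))
    (hb : ∀ α : Fin d →₀ ℕ,
      b α = ((List.finRange d).map fun i =>
        (UniversalEnvelopingAlgebra.ι L (bg i) : UniversalEnvelopingAlgebra L 𝔤) ^ α i).prod)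
    (r : ℝ≥0) (hr : 1 < r) (α β γ : Fin d →₀ ℕ) :
    ‖b.repr (b α * b β) γ‖₊ ≤
      r ^ ((α.sum fun _ n => n) + (β.sum fun _ n => n)) / r ^ (γ.sum fun _ n => n) := by
  have hmem : b α * b β ∈ b.integralSpanDegLE (β.degree + α.degree) :=
    UniversalEnvelopingAlgebra.IsPBWBasis.mul_mem hint hb α (b.self_mem_integralSpanDegLE le_rfl)
  rw [le_div_iff₀ (pow_pos (zero_lt_one.trans hr) _), add_comm]
  exact Module.Basis.nnnorm_repr_mul_pow_le hmem hr.le γ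

/-- if `c_{αβ,γ}` are the coefficients of the expansion of a product of two PBW
monomials, `X^α X^β = Σ_γ c_{αβ,γ} X^γ`, then `|c_{αβ,γ}| ≤ r^{|α|+|β|}/r^{|γ|}` for every
`r > 1`. -/
theorem pbw_structure_coeff_bound {p : ℕ} [Fact (Nat.Prime p)]
    (L : Type*) [NontriviallyNormedField L] [NormedAlgebra ℚ_[p] L]
    [FiniteDimensional ℚ_[p] L] [IsUltrametricDist L]
    (𝔤 : Type*) [LieRing 𝔤] [LieAlgebra L 𝔤] {d : ℕ}
    (bg : Module.Basis (Fin d) L 𝔤)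
    (hint : ∀ i j k, ‖bg.repr ⁅bg i, bg j⁆ k‖ ≤ 1)
    (b : Module.Basis (Fin d →₀ ℕ) L (UniversalEnvelopingAlgebra L 𝔤))
    (hb : ∀ α : Fin d →₀ ℕ,
      b α = ((List.finRange d).map fun i =>
        (UniversalEnvelopingAlgebra.ι L (bg i) : UniversalEnvelopingAlgebra L 𝔤) ^ α i).prod)
    (r : ℝ≥0) (hr : 1 < r) (α β γ : Fin d →₀ ℕ) :
    ‖b.repr (b α * b β) γ‖₊ ≤
      r ^ ((α.sum fun _ n => n) + (β.sum fun _ n => n)) / r ^ (γ.sum fun _ n => n) :=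
  pbw_structure_coeff_bound_general L 𝔤 bg hint b hb r hr α β γ
end

section
/- Let L be a nonarchimedean field and V a d-dimensional L-vector space with basis x_1,...,x_d. The standard contracting homotopy s̄ of the augmented Koszul complex S(V) ⊗ Λ^•V → L (defined inductively via the tensor-product decomposition along the lines Lx_j) is norm-decreasing for every Gauss-type norm ||·||_r with r > 1: ||s̄(λ)||_r ≤ ||λ||_r for all λ. -/
open scoped NNReal

/-- The Gauss norm `‖Σ d_α X^α‖_r = sup ‖d_α‖ r^{|α|}` on `S(V) = L[x_1,…,x_d]`. -/
noncomputable def gaussNormMv {L : Type*} [NontriviallyNormedField L] {d : ℕ} (r : ℝ≥0)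
    (f : MvPolynomial (Fin d) L) : ℝ≥0 :=
  f.support.sup fun α => ‖f.coeff α‖₊ * r ^ (α.sum fun _ n => n)

/-- The (total) Koszul complex `S(V) ⊗ Λ^•V` of a `d`-dimensional space `V` with basis
`x_1,…,x_d`, modelled as functions `I ↦ u_I` on index sets `I ⊆ {1,…,d}` (so that
`λ = Σ_I u_I ⊗ x_I`). -/
abbrev KoszulModel (L : Type*) [NontriviallyNormedField L] (d : ℕ) : Type _ :=
  Finset (Fin d) → MvPolynomial (Fin d) L

/-- The norm `‖Σ_I u_I ⊗ x_I‖_r = sup_I r^{|I|}·‖u_I‖_r` on the Koszul complex. -/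
noncomputable def koszulNorm {L : Type*} [NontriviallyNormedField L] {d : ℕ} (r : ℝ≥0)
    (l : KoszulModel L d) : ℝ≥0 :=
  Finset.univ.sup fun I : Finset (Fin d) => r ^ I.card * gaussNormMv r (l I)

/-- The Koszul differential `φ(u ⊗ x_{i_1}∧…∧x_{i_q}) = Σ_s (−1)^{s+1} u·x_{i_s} ⊗ (omit s)`,
written out in components. -/
noncomputable def koszulDiff {L : Type*} [NontriviallyNormedField L] {d : ℕ}
    (l : KoszulModel L d) : KoszulModel L d := fun J =>
  ∑ j : Fin d, if j ∈ J then 0 else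
    ((-1 : L) ^ (J.filter (· < j)).card) •
      (MvPolynomial.X j * l (insert j J))

/-- The standard contracting homotopy `s̄` of the augmented Koszul complex, built inductively
from the rank-one homotopies `s̄₀(x_j^n) = x_j^{n-1} ⊗ x_j` via the tensor-product
decomposition along the lines `L·x_j`; on basis vectors it is given by
`s̄(X^α ⊗ x_I) = X^{α−e_j} ⊗ x_j∧x_I` for `j = min(supp α)` when `min(supp α) < min I`,
and `0` otherwise. -/
noncomputable def koszulHomotopy {L : Type*} [NontriviallyNormedField L] {d : ℕ}
    (l : KoszulModel L d) : KoszulModel L d := fun I' =>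
  if h : I'.Nonempty then
    let j := I'.min' h
    (((l (I'.erase j)).support.filter fun α => α j ≠ 0 ∧ ∀ k, k < j → α k = 0).sum
      fun α => MvPolynomial.monomial (α - Finsupp.single j 1) ((l (I'.erase j)).coeff α))
  else 0

/-- The unit `η : L → S^•`. -/
noncomputable def koszulUnit {L : Type*} [NontriviallyNormedField L] {d : ℕ}
    (c : L) : KoszulModel L d := fun I => if I = ∅ then MvPolynomial.C c else 0

/-- The augmentation `ε : S^• → L`. -/
noncomputable def koszulAug {L : Type*} [NontriviallyNormedField L] {d : ℕ}
    (l : KoszulModel L d) : L := MvPolynomial.coeff 0 (l ∅)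

/-!
On monomials, `s̄` moves the factor `x_j`, `j = min I`, from the polynomial part into the exterior
part: the coefficient of `X^β ⊗ x_I` in `s̄ λ` is that of `X^(β + e_j) ⊗ x_(I ∖ j)` in `λ` when `β`
vanishes below `j`, and `0` otherwise. This shift leaves the weight `r^|I| r^|β|` unchanged, so
`s̄` does not increase the norm.

For the homotopy identity compare coefficients of `X^β ⊗ x_J` with `j = min J`. The terms of
`∂s̄` and `s̄∂` coming from an `i > j` cancel, their signs differing by the single element `j` of
`J` below `i`. What remains is the term `i = j` of `s̄∂`, present when `β` vanishes below `j`,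
and the terms `i < j` of `∂s̄`, present when `i` is the least index of the support of `β`: each
contributes the coefficient of `λ`, and exactly one is present, namely `i = min ({j} ∪ supp β)`.
For `J = ∅` only the second kind occurs, and no term at all for `β = 0`, which is `ηε`.
-/

open MvPolynomial Finsupp

theorem isLeast_insert_iff {α : Type*} [LinearOrder α] {s : Set α} {a b : α} :
    IsLeast (insert a s) b ↔ (b = a ∧ a ∈ lowerBounds s) ∨ (b < a ∧ IsLeast s b) := by
  rw [IsLeast, lowerBounds_insert, IsLeast]
  rcases lt_trichotomy b a with h | rfl | h
  · simp [h, h.ne, h.le]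
  · simp
  · simp [h.ne', not_le.2 h, not_lt.2 h.le]

namespace Finsupp

lemma mem_lowerBounds_support_iff {ι : Type*} [LinearOrder ι] {β : ι →₀ ℕ} {i : ι} :
    i ∈ lowerBounds (β.support : Set ι) ↔ ∀ k < i, β k = 0 := by
  simp only [lowerBounds, Finset.mem_coe, mem_support_iff, Set.mem_ofPred_eq]
  exact forall_congr' fun k => not_imp_comm.trans (by rw [not_le])

lemma isLeast_support_iff {ι : Type*} [LinearOrder ι] {β : ι →₀ ℕ} {i : ι} :
    IsLeast (β.support : Set ι) i ↔ β i ≠ 0 ∧ ∀ k < i, β k = 0 := by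
  rw [IsLeast, mem_lowerBounds_support_iff, Finset.mem_coe, mem_support_iff]

variable {ι : Type*} {β : ι →₀ ℕ} {i j : ι}

lemma tsub_single_apply_of_ne {k : ι} (h : k ≠ i) : (β - single i 1 : ι →₀ ℕ) k = β k := by
  simp [h]

lemma tsub_single_add_single_comm (hij : i ≠ j) :
    β - single i 1 + single j 1 = β + single j 1 - single i 1 := by
  ext k
  rcases eq_or_ne k i with rfl | hki
  · simp [hij]
  · simp [hki]

end Finsupp

section KoszulCoefficients

variable {L : Type*} [NontriviallyNormedField L] {d : ℕ}

lemma koszulHomotopy_empty (l : KoszulModel L d) : koszulHomotopy l ∅ = 0 := by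
  simp [koszulHomotopy]

lemma coeff_koszulHomotopy_of_isLeast (l : KoszulModel L d) {I : Finset (Fin d)} {j : Fin d}
    (hj : IsLeast (I : Set (Fin d)) j) (β : Fin d →₀ ℕ) :
    (koszulHomotopy l I).coeff β =
      if ∀ k < j, β k = 0 then (l (I.erase j)).coeff (β + single j 1) else 0 := by
  have hI : I.Nonempty := ⟨j, hj.1⟩
  have hmin : I.min' hI = j := (I.isLeast_min' hI).unique hj
  simp only [koszulHomotopy, dif_pos hI, hmin, coeff_sum, Finset.sum_filter]
  have hterm : ∀ α ∈ (l (I.erase j)).support,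
      (if α j ≠ 0 ∧ ∀ k < j, α k = 0 then
        monomial (α - single j 1) ((l (I.erase j)).coeff α) else 0).coeff β =
      if β + single j 1 = α then
        (if ∀ k < j, β k = 0 then (l (I.erase j)).coeff α else 0) else 0 := by
    intro α _
    by_cases hα : β + single j 1 = α
    · subst hα
      have hlow : ((β + single j 1 : Fin d →₀ ℕ) j ≠ 0 ∧
          ∀ k < j, (β + single j 1 : Fin d →₀ ℕ) k = 0) ↔ ∀ k < j, β k = 0 := by
        simp +contextual [ne_of_gt]
      simp only [hlow, if_true, add_tsub_cancel_right]
      split_ifs <;> simp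
    · rw [if_neg hα]
      split_ifs with hP
      · rw [coeff_monomial, if_neg]
        rintro rfl
        exact hα (tsub_add_cancel_of_le (single_le_iff.mpr (Nat.one_le_iff_ne_zero.mpr hP.1)))
      · exact coeff_zero β
  rw [Finset.sum_congr rfl hterm, Finset.sum_ite_eq]
  split_ifs with hmem <;> simp_all

noncomputable def koszulDiffTerm (l : KoszulModel L d) (J : Finset (Fin d)) (β : Fin d →₀ ℕ)
    (i : Fin d) : L :=
  if i ∈ J then 0 else
    (-1) ^ (J.filter (· < i)).card *
      if i ∈ β.support then (l (insert i J)).coeff (β - single i 1) else 0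

lemma coeff_koszulDiff (l : KoszulModel L d) (J : Finset (Fin d)) (β : Fin d →₀ ℕ) :
    (koszulDiff l J).coeff β = ∑ i, koszulDiffTerm l J β i := by
  simp only [koszulDiff, koszulDiffTerm, coeff_sum]
  refine Finset.sum_congr rfl fun i _ => ?_
  by_cases hi : i ∈ J
  · simp [hi]
  · rw [if_neg hi, if_neg hi, coeff_smul, coeff_X_mul', smul_eq_mul]

end KoszulCoefficients

section GaussNorm

variable {L : Type*} [NontriviallyNormedField L] {d : ℕ} (r : ℝ≥0)

lemma nnnorm_coeff_mul_le_gaussNormMv (f : MvPolynomial (Fin d) L) (α : Fin d →₀ ℕ) :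
    ‖f.coeff α‖₊ * r ^ α.degree ≤ gaussNormMv r f := by
  by_cases hα : α ∈ f.support
  · exact Finset.le_sup (f := fun α => ‖f.coeff α‖₊ * r ^ α.degree) hα
  · simp [MvPolynomial.notMem_support_iff.mp hα]

lemma koszulNorm_le_iff {l : KoszulModel L d} {C : ℝ≥0} :
    koszulNorm r l ≤ C ↔ ∀ I α, r ^ I.card * (‖(l I).coeff α‖₊ * r ^ α.degree) ≤ C := by
  refine ⟨fun h I α => ?_, fun h => Finset.sup_le fun I _ => ?_⟩
  · calc r ^ I.card * (‖(l I).coeff α‖₊ * r ^ α.degree)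
        ≤ r ^ I.card * gaussNormMv r (l I) := by
          gcongr
          exact nnnorm_coeff_mul_le_gaussNormMv r _ α
      _ ≤ koszulNorm r l := Finset.le_sup (f := fun I => r ^ I.card * gaussNormMv r (l I))
          (Finset.mem_univ I)
      _ ≤ C := h
  · rw [gaussNormMv, NNReal.mul_finset_sup]
    exact Finset.sup_le fun α _ => h I α

theorem koszulNorm_koszulHomotopy_le (l : KoszulModel L d) :
    koszulNorm r (koszulHomotopy l) ≤ koszulNorm r l := by
  refine (koszulNorm_le_iff r).2 fun I β => ?_
  obtain rfl | hI := I.eq_empty_or_nonempty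
  · simp [koszulHomotopy_empty]
  set j := I.min' hI
  have hj := I.isLeast_min' hI
  rw [coeff_koszulHomotopy_of_isLeast l hj]
  split_ifs
  · calc r ^ I.card * (‖(l (I.erase j)).coeff (β + single j 1)‖₊ * r ^ β.degree)
        = r ^ (I.erase j).card *
            (‖(l (I.erase j)).coeff (β + single j 1)‖₊ * r ^ (β + single j 1).degree) := by
          rw [← Finset.card_erase_add_one hj.1, map_add, degree_single]
          ring
      _ ≤ koszulNorm r l := (koszulNorm_le_iff r).1 le_rfl _ _
  · simp

end GaussNorm

section KoszulDiffTerm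

variable {L : Type*} [NontriviallyNormedField L] {d : ℕ} (l : KoszulModel L d)
  {J : Finset (Fin d)} {β : Fin d →₀ ℕ} {i j : Fin d}

lemma koszulDiffTerm_of_mem (h : i ∈ J) : koszulDiffTerm l J β i = 0 := if_pos h

lemma koszulDiffTerm_of_apply_eq_zero (h : β i = 0) : koszulDiffTerm l J β i = 0 := by
  simp [koszulDiffTerm, h]

lemma koszulDiffTerm_koszulHomotopy_of_lt (hi : ∀ k ∈ J, i < k) :
    koszulDiffTerm (koszulHomotopy l) J β i =
      if β i ≠ 0 ∧ ∀ k < i, β k = 0 then (l J).coeff β else 0 := by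
  have hiJ : i ∉ J := fun h => (hi i h).false
  have hfilter : J.filter (· < i) = ∅ :=
    Finset.filter_eq_empty_iff.mpr fun k hk => (hi k hk).asymm
  have hleast : IsLeast ((insert i J : Finset (Fin d)) : Set (Fin d)) i := by
    rw [Finset.coe_insert]
    refine ⟨Set.mem_insert i _, fun k hk => ?_⟩
    rcases hk with rfl | hk
    exacts [le_rfl, (hi k hk).le]
  rw [koszulDiffTerm, if_neg hiJ, hfilter, Finset.card_empty, pow_zero, one_mul,
    coeff_koszulHomotopy_of_isLeast l hleast, Finset.erase_insert hiJ]
  by_cases hβi : β i = 0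
  · simp [hβi]
  have hlow : (∀ k < i, (β - single i 1 : Fin d →₀ ℕ) k = 0) ↔ ∀ k < i, β k = 0 :=
    forall₂_congr fun k hk => by rw [tsub_single_apply_of_ne hk.ne]
  rw [if_pos (Finsupp.mem_support_iff.mpr hβi), if_congr hlow rfl rfl,
    tsub_add_cancel_of_le (single_le_iff.mpr (Nat.one_le_iff_ne_zero.mpr hβi))]
  simp [hβi]

lemma koszulDiffTerm_erase_of_isLeast (hj : IsLeast (J : Set (Fin d)) j) :
    koszulDiffTerm l (J.erase j) (β + single j 1) j = (l J).coeff β := by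
  have hfilter : (J.erase j).filter (· < j) = ∅ :=
    Finset.filter_eq_empty_iff.mpr fun k hk => not_lt.mpr (hj.2 (Finset.mem_of_mem_erase hk))
  have hj_supp : j ∈ (β + single j 1).support := by simp
  rw [koszulDiffTerm, if_neg (Finset.notMem_erase j J), hfilter, Finset.card_empty, pow_zero,
    one_mul, if_pos hj_supp, add_tsub_cancel_right, Finset.insert_erase hj.1]

lemma koszulDiffTerm_koszulHomotopy_add_of_lt (hj : IsLeast (J : Set (Fin d)) j) (hji : j < i) :
    koszulDiffTerm (koszulHomotopy l) J β i +
      (if ∀ k < j, β k = 0 then koszulDiffTerm l (J.erase j) (β + single j 1) i else 0) = 0 := by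
  by_cases hiJ : i ∈ J
  · rw [koszulDiffTerm_of_mem _ hiJ, koszulDiffTerm_of_mem _ (Finset.mem_erase.2 ⟨hji.ne', hiJ⟩),
      ite_self, add_zero]
  have hleast : IsLeast ((insert i J : Finset (Fin d)) : Set (Fin d)) j := by
    rw [Finset.coe_insert]
    refine ⟨Set.mem_insert_of_mem i hj.1, fun k hk => ?_⟩
    rcases hk with rfl | hk
    exacts [hji.le, hj.2 hk]
  have hsign : (J.filter (· < i)).card = ((J.erase j).filter (· < i)).card + 1 := by
    rw [Finset.filter_erase, Finset.card_erase_add_one (Finset.mem_filter.2 ⟨hj.1, hji⟩)]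
  have hlow : (∀ k < j, (β - single i 1 : Fin d →₀ ℕ) k = 0) ↔ ∀ k < j, β k = 0 :=
    forall₂_congr fun k hk => by rw [tsub_single_apply_of_ne (hk.trans hji).ne]
  have hsupp : i ∈ (β + single j 1).support ↔ i ∈ β.support := by simp [hji.ne]
  rw [koszulDiffTerm, koszulDiffTerm, if_neg hiJ, if_neg fun h => hiJ (Finset.mem_of_mem_erase h),
    coeff_koszulHomotopy_of_isLeast l hleast, Finset.erase_insert_of_ne hji.ne',
    if_congr hlow rfl rfl, hsign, pow_succ, tsub_single_add_single_comm hji.ne']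
  simp only [hsupp]
  split_ifs <;> ring

end KoszulDiffTerm

section HomotopyIdentity

variable {L : Type*} [NontriviallyNormedField L] {d : ℕ} (l : KoszulModel L d)

lemma coeff_koszulDiff_koszulHomotopy_empty (β : Fin d →₀ ℕ) :
    (koszulDiff (koszulHomotopy l) ∅).coeff β = if β = 0 then 0 else (l ∅).coeff β := by
  have huniq : ∀ a b : Fin d, (β a ≠ 0 ∧ ∀ k < a, β k = 0) → (β b ≠ 0 ∧ ∀ k < b, β k = 0) →
      a = b := fun a b ha hb => (isLeast_support_iff.2 ha).unique (isLeast_support_iff.2 hb)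
  have hex : (∃ i, β i ≠ 0 ∧ ∀ k < i, β k = 0) ↔ β ≠ 0 :=
    ⟨fun ⟨i, hi, _⟩ hβ => hi (by simp [hβ]), fun hβ =>
      ⟨_, isLeast_support_iff.1 (β.support.isLeast_min' (support_nonempty_iff.2 hβ))⟩⟩
  simp only [coeff_koszulDiff, koszulDiffTerm_koszulHomotopy_of_lt l fun k hk =>
    absurd hk (Finset.notMem_empty k)]
  rw [Fintype.sum_ite_eq_ite_exists _ huniq]
  simp only [hex, ne_eq, ite_not]

lemma coeff_koszulDiff_koszulHomotopy_add_of_isLeast {J : Finset (Fin d)} {j : Fin d}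
    (hj : IsLeast (J : Set (Fin d)) j) (β : Fin d →₀ ℕ) :
    (koszulDiff (koszulHomotopy l) J).coeff β + (koszulHomotopy (koszulDiff l) J).coeff β =
      (l J).coeff β := by
  classical
  have hterm : ∀ i, koszulDiffTerm (koszulHomotopy l) J β i +
      (if ∀ k < j, β k = 0 then koszulDiffTerm l (J.erase j) (β + single j 1) i else 0) =
      if IsLeast (insert j (β.support : Set (Fin d))) i then (l J).coeff β else 0 := by
    intro i
    rw [isLeast_insert_iff, mem_lowerBounds_support_iff, isLeast_support_iff]
    rcases lt_trichotomy i j with hij | rfl | hji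
    · have hB : (if ∀ k < j, β k = 0 then
          koszulDiffTerm l (J.erase j) (β + single j 1) i else 0) = 0 := by
        split_ifs with hlow
        · exact koszulDiffTerm_of_apply_eq_zero l (by simp [hlow i hij, hij.ne])
        · rfl
      rw [koszulDiffTerm_koszulHomotopy_of_lt l fun k hk => hij.trans_le (hj.2 hk), hB, add_zero]
      simp [hij, hij.ne]
    · rw [koszulDiffTerm_of_mem _ hj.1, zero_add, koszulDiffTerm_erase_of_isLeast l hj]
      simp
    · rw [koszulDiffTerm_koszulHomotopy_add_of_lt l hj hji]
      simp [hji.ne', not_lt.2 hji.le]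
  rw [coeff_koszulDiff, coeff_koszulHomotopy_of_isLeast _ hj, coeff_koszulDiff,
    Finset.ite_sum_zero, ← Finset.sum_add_distrib, Fintype.sum_congr _ _ hterm,
    Fintype.sum_ite_eq_ite_exists _ fun a b ha hb => ha.unique hb, if_pos]
  exact ⟨_, Finset.coe_insert j β.support ▸
    (insert j β.support).isLeast_min' (Finset.insert_nonempty _ _)⟩

theorem koszulDiff_koszulHomotopy_add_koszulHomotopy_koszulDiff :
    koszulDiff (koszulHomotopy l) + koszulHomotopy (koszulDiff l) =
      l - koszulUnit (koszulAug l) := by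
  funext J
  ext β
  simp only [Pi.add_apply, Pi.sub_apply, coeff_add, coeff_sub]
  obtain rfl | hJ := J.eq_empty_or_nonempty
  · rw [koszulHomotopy_empty, coeff_zero, add_zero, coeff_koszulDiff_koszulHomotopy_empty]
    by_cases hβ : β = 0 <;> simp [koszulUnit, koszulAug, coeff_C, hβ, eq_comm]
  · rw [coeff_koszulDiff_koszulHomotopy_add_of_isLeast l (J.isLeast_min' hJ)]
    simp [koszulUnit, hJ.ne_empty]

end HomotopyIdentity

theorem koszulHomotopy_norm_decreasing_general {L : Type*} [NontriviallyNormedField L] {d : ℕ} :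
    (∀ l : KoszulModel L d,
      koszulDiff (koszulHomotopy l) + koszulHomotopy (koszulDiff l)
        = l - koszulUnit (koszulAug l)) ∧
    (∀ (r : ℝ≥0), 1 < r → ∀ l : KoszulModel L d,
      koszulNorm r (koszulHomotopy l) ≤ koszulNorm r l) :=
  ⟨koszulDiff_koszulHomotopy_add_koszulHomotopy_koszulDiff,
    fun r _ => koszulNorm_koszulHomotopy_le r⟩

/-- the standard contracting homotopy `s̄` of the augmented Koszul complex
(`∂s̄ + s̄∂ = id − ηε`) is norm-decreasing for every Gauss-type norm `‖·‖_r` with `r > 1`. -/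
theorem koszulHomotopy_norm_decreasing {L : Type*} [NontriviallyNormedField L]
    [IsUltrametricDist L] {d : ℕ} :
    (∀ l : KoszulModel L d,
      koszulDiff (koszulHomotopy l) + koszulHomotopy (koszulDiff l)
        = l - koszulUnit (koszulAug l)) ∧
    (∀ (r : ℝ≥0), 1 < r → ∀ l : KoszulModel L d,
      koszulNorm r (koszulHomotopy l) ≤ koszulNorm r l) :=
  koszulHomotopy_norm_decreasing_general
end
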